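/- arXiv:0912.0615 — 3 statements merged into one kernel-verified Lean document; each statement's English description precedes it below -/
import Mathlib

section
/- Let f : [0,∞) → ℝ be nonincreasing and convex, and define h(z,m,x) := f(max(z,m) − x) − f(max(z, m − x)) for z ≥ 0 and 0 ≤ x ≤ m. Then for all z ≥ 0 and 0 < x ≤ m, h(z,m,x) + h(z, m−x, −x) ≥ 0. -/
/-! With `A = max z (m - x)` and `B = max z m`, the sum is `f (B - x) + f (A + x) - f A - f B`.
Since `B - x ≤ A ≤ A + x` and `(B - x) + (A + x) = A + B`, the pair `(A, B)` lies between the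
pair `(B - x, A + x)` with the same sum, so convexity of `f` gives the inequality. -/

/-- The payoff difference `h(z,m,x) = f(max z m - x) - f(max z (m - x))`. -/
noncomputable def hFun (f : ℝ → ℝ) (z m x : ℝ) : ℝ :=
  f (max z m - x) - f (max z (m - x))

theorem ConvexOn.map_add_map_le_of_add_eq {𝕜 β : Type*} [Field 𝕜] [LinearOrder 𝕜]
    [IsStrictOrderedRing 𝕜] [AddCommGroup β] [PartialOrder β] [IsOrderedAddMonoid β]
    [Module 𝕜 β] {s : Set 𝕜} {f : 𝕜 → β}
    (hf : ConvexOn 𝕜 s f) {p q r t : 𝕜} (hp : p ∈ s) (ht : t ∈ s)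
    (hpq : p ≤ q) (hqt : q ≤ t) (hsum : q + r = p + t) :
    f q + f r ≤ f p + f t := by
  rcases hpq.eq_or_lt with rfl | hpq
  · obtain rfl : r = t := by linear_combination hsum
    rfl
  have hd : 0 < t - p := by linarith
  -- `q` and `r` are the convex combinations of `p` and `t` with the same two weights, swapped.
  set a := (t - q) / (t - p)
  set b := (q - p) / (t - p)
  have ha : 0 ≤ a := div_nonneg (by linarith) hd.le
  have hb : 0 ≤ b := div_nonneg (by linarith) hd.le
  have hab : a + b = 1 := by
    rw [← add_div, div_eq_one_iff_eq hd.ne']; ring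
  have hq : a • p + b • t = q := by simp only [smul_eq_mul, a, b]; field_simp; ring
  have hr : b • p + a • t = r := by
    simp only [smul_eq_mul, a, b]; field_simp; linear_combination (p - t) * hsum
  calc f q + f r = f (a • p + b • t) + f (b • p + a • t) := by rw [hq, hr]
    _ ≤ (a • f p + b • f t) + (b • f p + a • f t) :=
      add_le_add (hf.2 hp ht ha hb hab) (hf.2 hp ht hb ha (by rw [add_comm, hab]))
    _ = f p + f t := by
      rw [add_add_add_comm, ← add_smul, add_comm (b • f t), ← add_smul, hab, one_smul, one_smul]

theorem max_sub_le_max_sub {α : Type*} [AddCommGroup α] [LinearOrder α] [IsOrderedAddMonoid α]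
    {z m x : α} (hx : 0 ≤ x) : max z m - x ≤ max z (m - x) := by
  rw [← max_sub_sub_right]
  exact max_le_max (sub_le_self z hx) le_rfl

theorem hFun_add_nonneg_general (f : ℝ → ℝ)
    (hconv : ConvexOn ℝ (Set.Ici 0) f) (z m x : ℝ)
    (hx : 0 < x) (hxm : x ≤ m) :
    hFun f z m x + hFun f z (m - x) (-x) ≥ 0 := by
  set A := max z (m - x)
  set B := max z m
  have hB : max z (m - x - -x) = B := by rw [sub_neg_eq_add, sub_add_cancel]
  have hmem_left : B - x ∈ Set.Ici 0 := sub_nonneg.2 (hxm.trans (le_max_right z m))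
  have hmem_right : A - -x ∈ Set.Ici 0 := by
    rw [sub_neg_eq_add, Set.mem_Ici]
    linarith [le_max_right z (m - x)]
  have key : f A + f B ≤ f (B - x) + f (A - -x) :=
    hconv.map_add_map_le_of_add_eq hmem_left hmem_right (max_sub_le_max_sub hx.le)
      (by linarith) (by ring)
  simp only [hFun, hB]
  linarith

/-- If `f : [0,∞) → ℝ` is nonincreasing and convex, then for all `z ≥ 0` and
`0 < x ≤ m`, `h(z,m,x) + h(z, m - x, -x) ≥ 0`. -/
theorem hFun_add_nonneg (f : ℝ → ℝ) (hmono : AntitoneOn f (Set.Ici 0))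
    (hconv : ConvexOn ℝ (Set.Ici 0) f) (z m x : ℝ) (hz : 0 ≤ z)
    (hx : 0 < x) (hxm : x ≤ m) :
    hFun f z m x + hFun f z (m - x) (-x) ≥ 0 :=
  hFun_add_nonneg_general f hconv z m x hx hxm
end

section
/- Let f : [0,∞) → ℝ be nonincreasing and convex with α := (f(z) − f(0))/z for fixed z > 0, and let h(z,m,x) := f(max(z,m) − x) − f(max(z, m − x)). Then α·z ≤ h(z,m,x) ≤ |α|·z for all m ≥ 0 and x ≤ m. -/
open Set

section Slope

variable {𝕜 : Type*} [Field 𝕜] [LinearOrder 𝕜] [IsStrictOrderedRing 𝕜]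
  {s : Set 𝕜} {f : 𝕜 → 𝕜} {a b c d : 𝕜}

theorem ConvexOn.slope_le_slope_of_le_of_le (hf : ConvexOn 𝕜 s f) (ha : a ∈ s) (hb : b ∈ s)
    (hc : c ∈ s) (hd : d ∈ s) (hab : a < b) (hcd : c < d) (hac : a ≤ c) (hbd : b ≤ d) :
    slope f a b ≤ slope f c d :=
  calc slope f a b
    _ ≤ slope f a d := hf.slope_mono ha ⟨hb, hab.ne'⟩ ⟨hd, (hab.trans_le hbd).ne'⟩ hbd
    _ = slope f d a := slope_comm f a d
    _ ≤ slope f d c := hf.slope_mono hd ⟨ha, (hab.trans_le hbd).ne⟩ ⟨hc, hcd.ne⟩ hac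
    _ = slope f c d := slope_comm f d c

variable {z : 𝕜}

theorem ConvexOn.sub_le_sub_zero_of_sub_le (hmono : AntitoneOn f (Ici 0))
    (hconv : ConvexOn 𝕜 (Ici 0) f) (hz : 0 < z) (ha : 0 ≤ a) (hab : a ≤ b) (hzb : z ≤ b)
    (hbaz : b - a ≤ z) : f a - f b ≤ f 0 - f z := by
  have h0 : (0 : 𝕜) ∈ Ici 0 := self_mem_Ici
  have hz' : z ∈ Ici 0 := hz.le
  have hfz : f z ≤ f 0 := hmono h0 hz' hz.le
  rcases hab.eq_or_lt with rfl | hab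
  · linarith
  have hslope : slope f 0 z ≤ slope f a b :=
    hconv.slope_le_slope_of_le_of_le h0 hz' (mem_Ici.2 ha) (mem_Ici.2 (ha.trans hab.le)) hz hab
      ha hzb
  have hslope_nonpos : slope f 0 z ≤ 0 := hmono.slope_nonpos h0 hz'
  have hdiff_ab : f b - f a = (b - a) * slope f a b := by
    rw [slope_def_field]; field_simp [(sub_pos.2 hab).ne']
  have hdiff_0z : f z - f 0 = z * slope f 0 z := by
    rw [slope_def_field]; field_simp [hz.ne']; ring
  nlinarith [sub_pos.2 hab]

theorem ConvexOn.abs_sub_le_sub_zero_of_abs_sub_le (hmono : AntitoneOn f (Ici 0))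
    (hconv : ConvexOn 𝕜 (Ici 0) f) (hz : 0 < z) (ha : 0 ≤ a) (hb : 0 ≤ b)
    (hzab : z ≤ max a b) (habz : |a - b| ≤ z) : |f a - f b| ≤ f 0 - f z := by
  wlog hab : a ≤ b generalizing a b
  · rw [abs_sub_comm] at habz ⊢
    exact this hb ha (max_comm a b ▸ hzab) habz (le_of_not_ge hab)
  rw [max_eq_right hab] at hzab
  have hfab : 0 ≤ f a - f b := sub_nonneg.2 (hmono ha hb hab)
  rw [abs_of_nonneg hfab]
  exact hconv.sub_le_sub_zero_of_sub_le hmono hz ha hab hzab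
    ((le_abs_self _).trans (abs_sub_comm a b ▸ habz))

end Slope

theorem abs_max_sub_sub_max_le {z m x : ℝ} (hz : 0 ≤ z) (hm : 0 ≤ m) (hxm : x ≤ m) :
    |(max z m - x) - max z (m - x)| ≤ z := by
  rw [abs_le]
  rcases le_total z m with h1 | h1 <;> rcases le_total z (m - x) with h2 | h2 <;>
    simp only [max_eq_left, max_eq_right, h1, h2] <;> constructor <;> linarith

/-- If `f : [0,∞) → ℝ` is nonincreasing and convex, `z > 0` and
`α = (f z - f 0)/z`, then `α * z ≤ h(z,m,x) ≤ |α| * z` for all `m ≥ 0` and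
`x ≤ m`. -/
theorem hFun_bounds (f : ℝ → ℝ) (hmono : AntitoneOn f (Set.Ici 0))
    (hconv : ConvexOn ℝ (Set.Ici 0) f) (z : ℝ) (hz : 0 < z)
    (α : ℝ) (hα : α = (f z - f 0) / z) (m x : ℝ) (hm : 0 ≤ m) (hxm : x ≤ m) :
    α * z ≤ hFun f z m x ∧ hFun f z m x ≤ |α| * z := by
  have hαz : α * z = f z - f 0 := by rw [hα]; field_simp
  have hα_nonpos : α ≤ 0 := by
    rw [hα]
    exact div_nonpos_of_nonpos_of_nonneg (sub_nonpos.2 (hmono self_mem_Ici hz.le hz.le)) hz.le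
  have hbound : |hFun f z m x| ≤ f 0 - f z :=
    hconv.abs_sub_le_sub_zero_of_abs_sub_le hmono hz (by linarith [le_max_right z m])
      (hz.le.trans (le_max_left _ _)) (le_max_of_le_right (le_max_left _ _))
      (abs_max_sub_sub_max_le hz.le hm hxm)
  rw [abs_of_nonpos hα_nonpos]
  constructor <;> linarith [abs_le.1 hbound]
end

section
/- Let X_n = ξ₁ + … + ξ_n with i.i.d. steps satisfying ξ₁ ≥_st −ξ₁, M_n = max_{0≤k≤n} X_k, and let f : [0,∞) → ℝ be nonincreasing and convex. Then for all n and all z ≥ 0, E[f(max(z, M_n) − X_n)] ≥ E[f(max(z, M_n))]. -/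
/-!
Write `u = max z Mₙ` and `v = u - Xₙ`. Reversing the order of the steps and flipping their signs,
`(ξ₁, …, ξₙ) ↦ (-ξₙ, …, -ξ₁)`, turns `Mₙ` into `Mₙ - Xₙ` and `Xₙ` into `-Xₙ`, and convexity of `f`
(increments of `f` grow to the right) gives the pointwise inequality
`f u + f u' ≤ f v + f v'` between the walk and its reversal. The reversed walk has i.i.d. steps
distributed as `-ξ₁ ≤st ξ₁`, while `f v - f u` is a coordinatewise nondecreasing function of the
steps, so its mean is no larger for the reversed walk than for the walk itself. Adding the two
inequalities gives `E f u ≤ E f v`.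
For unbounded `f` this is applied to the truncations `max f (f 0 - c)`, and `c → ∞`.
-/

open Set Filter MeasureTheory ProbabilityTheory

theorem ConvexOn.map_add_sub_map_le_of_le {𝕜 : Type*} [Field 𝕜] [LinearOrder 𝕜]
    [IsStrictOrderedRing 𝕜] {S : Set 𝕜} {f : 𝕜 → 𝕜} (hf : ConvexOn 𝕜 S f) {p q d : 𝕜}
    (hp : p ∈ S) (hqd : q + d ∈ S) (hpq : p ≤ q) (hd : 0 ≤ d) :
    f (p + d) - f p ≤ f (q + d) - f q := by
  rcases hpq.eq_or_lt with rfl | hpq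
  · rfl
  rcases hd.eq_or_lt with rfl | hd
  · simp
  have hlen : 0 < q + d - p := by linarith
  -- `p + d` and `q` are the convex combinations of `p` and `q + d` with weights `t, 1 - t` swapped
  set t := (q - p) / (q + d - p)
  have ht : 0 ≤ t := div_nonneg (by linarith) hlen.le
  have ht' : 0 ≤ 1 - t := by rw [sub_nonneg, div_le_one hlen]; linarith
  have h₁ := hf.2 hp hqd ht ht' (by ring)
  have h₂ := hf.2 hp hqd ht' ht (by ring)
  have e₁ : t • p + (1 - t) • (q + d) = p + d := by simp only [t, smul_eq_mul]; field_simp; ring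
  have e₂ : (1 - t) • p + t • (q + d) = q := by simp only [t, smul_eq_mul]; field_simp; ring
  rw [e₁] at h₁
  rw [e₂] at h₂
  simp only [smul_eq_mul] at h₁ h₂
  linarith

theorem ConvexOn.map_max_add_map_max_le {f : ℝ → ℝ} (hf : ConvexOn ℝ (Ici 0) f) {z m s : ℝ}
    (hz : 0 ≤ z) (hm : 0 ≤ m) (hsm : s ≤ m) :
    f (max z m) + f (max z (m - s)) ≤ f (max z m - s) + f (max z (m - s) + s) := by
  wlog hs : 0 ≤ s generalizing m s
  · have := this (m := m - s) (s := -s) (by linarith) (by linarith) (by linarith)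
    simp only [sub_neg_eq_add, sub_add_cancel, ← sub_eq_add_neg] at this
    linarith
  have key := hf.map_add_sub_map_le_of_le (p := max z m - s) (q := max z (m - s)) (d := s)
    (by simp only [mem_Ici]; linarith [le_max_right z m])
    (by simp only [mem_Ici]; linarith [le_max_left z (m - s)])
    (by
      rw [sub_le_iff_le_add, max_le_iff]
      constructor <;> linarith [le_max_left z (m - s), le_max_right z (m - s)])
    hs
  simp only [sub_add_cancel] at key
  linarith

theorem AntitoneOn.antitone_max_comp_max_zero {f : ℝ → ℝ} (hf : AntitoneOn f (Ici 0)) (b : ℝ) :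
    Antitone fun t ↦ max (f (max t 0)) b := fun s t hst ↦
  max_le_max (hf (le_max_right s 0) (le_max_right t 0) (max_le_max hst le_rfl)) le_rfl

theorem ConvexOn.max_comp_max_zero {f : ℝ → ℝ} (hf : ConvexOn ℝ (Ici 0) f) (b : ℝ) :
    ConvexOn ℝ (Ici 0) fun t ↦ max (f (max t 0)) b :=
  (hf.sup (convexOn_const b (convex_Ici 0))).congr fun t (ht : 0 ≤ t) ↦ by simp [max_eq_left ht]

theorem ENNReal.ofReal_sub_eq_iSup_ofReal_sub_max (a b : ℝ) :
    ENNReal.ofReal (a - b) = ⨆ c : ℕ, ENNReal.ofReal (a - max b (a - c)) := by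
  simp_rw [← min_sub_sub_left, _root_.sub_sub_cancel, ENNReal.ofReal_min, ENNReal.ofReal_natCast,
    ← inf_iSup_eq, ENNReal.iSup_natCast, inf_top_eq]

theorem Antitone.integrable_comp_of_nonneg {α : Type*} [MeasurableSpace α] {ρ : Measure α}
    [IsFiniteMeasure ρ] {g : ℝ → ℝ} (hg : Antitone g) {a : ℝ} (ha : ∀ t, a ≤ g t)
    {w : α → ℝ} (hwm : Measurable w) (hw : ∀ x, 0 ≤ w x) :
    Integrable (fun x ↦ g (w x)) ρ :=
  .of_bound (hg.measurable.comp hwm).aestronglyMeasurable (max |a| |g 0|)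
    (ae_of_all _ fun x ↦ abs_le_max_abs_abs (ha _) (hg (hw x)))

theorem lintegral_ofReal_sub_eq {α : Type*} [MeasurableSpace α] {ρ : Measure α}
    [IsProbabilityMeasure ρ] {F : α → ℝ} (hF : Measurable F) {a b : ℝ} (hb : ∀ x, b ≤ F x)
    (ha : ∀ x, F x ≤ a) :
    ∫⁻ x, ENNReal.ofReal (a - F x) ∂ρ = ENNReal.ofReal (a - ∫ x, F x ∂ρ) := by
  have hint : Integrable F ρ := .of_bound hF.aestronglyMeasurable (max |b| |a|)
    (ae_of_all _ fun x ↦ abs_le_max_abs_abs (hb x) (ha x))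
  rw [← ofReal_integral_eq_lintegral_ofReal (f := fun x ↦ a - F x)
    ((integrable_const a).sub hint) (ae_of_all _ fun x ↦ sub_nonneg.2 (ha x)),
    integral_sub (integrable_const a) hint]
  simp

theorem IsUpperSet.eq_empty_or_univ_or_Ioi_or_Ici {α : Type*} [ConditionallyCompleteLinearOrder α]
    {U : Set α} (hU : IsUpperSet U) : U = ∅ ∨ U = univ ∨ ∃ b, U = Ioi b ∨ U = Ici b := by
  rcases U.eq_empty_or_nonempty with hempty | hne
  · exact .inl hempty
  by_cases hbdd : BddBelow U
  · refine .inr (.inr ⟨sInf U, ?_⟩)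
    have hIoi : Ioi (sInf U) ⊆ U := fun x hx ↦
      let ⟨y, hyU, hyx⟩ := (csInf_lt_iff hbdd hne).1 hx
      hU hyx.le hyU
    by_cases hmem : sInf U ∈ U
    · exact .inr (subset_antisymm (fun x hx ↦ csInf_le hbdd hx) (hU.Ici_subset hmem))
    · refine .inl (subset_antisymm (fun x hx ↦ ?_) hIoi)
      exact (csInf_le hbdd hx).lt_of_ne fun h ↦ hmem (h ▸ hx)
  · refine .inr (.inl (eq_univ_of_forall fun x ↦ ?_))
    obtain ⟨y, hyU, hyx⟩ := not_bddBelow_iff.1 hbdd x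
    exact hU hyx.le hyU

theorem integral_pi_eq_integral_integral_cons {α E : Type*} [MeasurableSpace α]
    [NormedAddCommGroup E] [NormedSpace ℝ E] {ρ : Measure α} [SigmaFinite ρ] {n : ℕ}
    {F : (Fin (n + 1) → α) → E} (hF : Integrable F (Measure.pi fun _ ↦ ρ)) :
    ∫ x, F x ∂(Measure.pi fun _ ↦ ρ) = ∫ a, ∫ w, F (Fin.cons a w) ∂(Measure.pi fun _ ↦ ρ) ∂ρ := by
  have he := (measurePreserving_piFinSuccAbove (fun _ : Fin (n + 1) ↦ ρ) 0).symm
  have hF' := (he.integrable_comp_emb (MeasurableEquiv.measurableEmbedding _)).2 hF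
  rw [← he.integral_comp']
  exact (integral_prod _ hF').trans (by simp [Fin.consEquiv])

def StochasticallyLE (ν μ : Measure ℝ) : Prop := ∀ a, ν (Ioi a) ≤ μ (Ioi a)

namespace StochasticallyLE

variable {ν μ : Measure ℝ}

theorem measure_Ici_le [IsFiniteMeasure ν] [IsFiniteMeasure μ] (h : StochasticallyLE ν μ)
    (b : ℝ) : ν (Ici b) ≤ μ (Ici b) := by
  have hIci : ⋂ r > (0 : ℝ), Ioi (b - r) = Ici b := by
    ext x
    simp only [mem_iInter, mem_Ioi, mem_Ici]
    exact ⟨fun hx ↦ le_of_forall_pos_lt_add fun r hr ↦ by linarith [hx r hr],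
      fun hx r hr ↦ by linarith⟩
  have hmono : ∀ i j : ℝ, 0 < i → i ≤ j → Ioi (b - i) ⊆ Ioi (b - j) := fun i j _ hij ↦
    Ioi_subset_Ioi (by linarith)
  have hlim (ρ : Measure ℝ) [IsFiniteMeasure ρ] :=
    tendsto_measure_biInter_gt (μ := ρ) (fun r _ ↦ measurableSet_Ioi.nullMeasurableSet) hmono
      ⟨1, one_pos, measure_ne_top _ _⟩
  rw [← hIci]
  exact le_of_tendsto_of_tendsto (hlim ν) (hlim μ) (Eventually.of_forall fun r ↦ h _)

variable [IsProbabilityMeasure ν] [IsProbabilityMeasure μ]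

theorem measure_le_of_isUpperSet (h : StochasticallyLE ν μ) {U : Set ℝ} (hU : IsUpperSet U) :
    ν U ≤ μ U := by
  rcases hU.eq_empty_or_univ_or_Ioi_or_Ici with rfl | rfl | ⟨b, rfl | rfl⟩
  · simp
  · simp
  · exact h b
  · exact h.measure_Ici_le b

theorem integral_le_of_monotone (h : StochasticallyLE ν μ) {g : ℝ → ℝ} (hg : Monotone g)
    {C : ℝ} (hC : ∀ x, ‖g x‖ ≤ C) : ∫ x, g x ∂ν ≤ ∫ x, g x ∂μ := by
  have hnn : ∀ x, 0 ≤ g x + C := fun x ↦ by linarith [(abs_le.1 (hC x)).1]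
  have hmeas : Measurable fun x ↦ g x + C := (hg.add_const C).measurable
  have hint (ρ : Measure ℝ) [IsProbabilityMeasure ρ] : Integrable g ρ :=
    .of_bound hg.measurable.aestronglyMeasurable C (ae_of_all _ hC)
  -- layer cake: both sides integrate the measures of the upper sets `{x | t < g x + C}`
  have hlayer : ∫⁻ x, ENNReal.ofReal (g x + C) ∂ν ≤ ∫⁻ x, ENNReal.ofReal (g x + C) ∂μ := by
    rw [lintegral_eq_lintegral_meas_lt _ (ae_of_all _ hnn) hmeas.aemeasurable,
      lintegral_eq_lintegral_meas_lt _ (ae_of_all _ hnn) hmeas.aemeasurable]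
    exact lintegral_mono fun t ↦ h.measure_le_of_isUpperSet fun x y hxy hx ↦
      show t < g y + C from hx.trans_le (by linarith [hg hxy])
  have hshift : ∫ x, g x + C ∂ν ≤ ∫ x, g x + C ∂μ := by
    rw [integral_eq_lintegral_of_nonneg_ae (ae_of_all _ hnn) hmeas.aestronglyMeasurable,
      integral_eq_lintegral_of_nonneg_ae (ae_of_all _ hnn) hmeas.aestronglyMeasurable]
    exact ENNReal.toReal_mono ((hint μ).add (integrable_const C)).lintegral_lt_top.ne hlayer
  rw [integral_add (hint ν) (integrable_const C), integral_add (hint μ) (integrable_const C)]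
    at hshift
  simpa using hshift

theorem integral_pi_le_of_monotone (h : StochasticallyLE ν μ) {n : ℕ} {F : (Fin n → ℝ) → ℝ}
    (hF : Monotone F) (hFm : Measurable F) {C : ℝ} (hC : ∀ x, ‖F x‖ ≤ C) :
    ∫ x, F x ∂(Measure.pi fun _ ↦ ν) ≤ ∫ x, F x ∂(Measure.pi fun _ ↦ μ) := by
  induction n with
  | zero => rw [Measure.pi_of_empty, Measure.pi_of_empty]
  | succ n ih =>
    have hsplit (ρ : Measure ℝ) [IsProbabilityMeasure ρ] :
        ∫ x, F x ∂(Measure.pi fun _ ↦ ρ) =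
          ∫ a, ∫ w, F (Fin.cons a w) ∂(Measure.pi fun _ ↦ ρ) ∂ρ :=
      integral_pi_eq_integral_integral_cons
        (.of_bound hFm.aestronglyMeasurable C (ae_of_all _ hC))
    have hsection (ρ : Measure ℝ) [IsProbabilityMeasure ρ] :
        Monotone (fun a ↦ ∫ w, F (Fin.cons a w) ∂(Measure.pi fun _ ↦ ρ)) ∧
          ∀ a, ‖∫ w, F (Fin.cons a w) ∂(Measure.pi fun _ ↦ ρ)‖ ≤ C := by
      have hint (a : ℝ) : Integrable (fun w ↦ F (Fin.cons a w)) (Measure.pi fun _ ↦ ρ) :=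
        .of_bound (hFm.comp (by fun_prop)).aestronglyMeasurable C (ae_of_all _ fun _ ↦ hC _)
      refine ⟨fun a b hab ↦ integral_mono (hint a) (hint b) fun w ↦
        hF (Fin.cons_le_cons.2 ⟨hab, le_rfl⟩), fun a ↦ ?_⟩
      simpa using norm_integral_le_of_norm_le_const (μ := Measure.pi fun _ ↦ ρ)
        (ae_of_all _ fun w ↦ hC (Fin.cons a w))
    have hint (ρ : Measure ℝ) [IsProbabilityMeasure ρ] :
        Integrable (fun a ↦ ∫ w, F (Fin.cons a w) ∂(Measure.pi fun _ ↦ ρ)) ν :=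
      .of_bound (hsection ρ).1.measurable.aestronglyMeasurable C (ae_of_all _ (hsection ρ).2)
    calc ∫ x, F x ∂(Measure.pi fun _ ↦ ν)
        = ∫ a, ∫ w, F (Fin.cons a w) ∂(Measure.pi fun _ ↦ ν) ∂ν := hsplit ν
      _ ≤ ∫ a, ∫ w, F (Fin.cons a w) ∂(Measure.pi fun _ ↦ μ) ∂ν :=
        integral_mono (hint ν) (hint μ) fun a ↦
          ih (fun w w' hw ↦ hF (Fin.cons_le_cons.2 ⟨le_rfl, hw⟩)) (hFm.comp (by fun_prop))
            fun w ↦ hC _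
      _ ≤ ∫ a, ∫ w, F (Fin.cons a w) ∂(Measure.pi fun _ ↦ μ) ∂μ :=
        h.integral_le_of_monotone (hsection μ).1 (hsection μ).2
      _ = ∫ x, F x ∂(Measure.pi fun _ ↦ μ) := (hsplit μ).symm

end StochasticallyLE

section Walk

open Finset

variable {n : ℕ}

def partialSum (x : Fin n → ℝ) (k : ℕ) : ℝ := ∑ i : Fin n with i.val < k, x i

noncomputable def runningMax (x : Fin n → ℝ) : ℝ := ⨆ k : Fin (n + 1), partialSum x k

def negRev (x : Fin n → ℝ) : Fin n → ℝ := fun i ↦ -x i.rev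

@[simp]
theorem partialSum_zero (x : Fin n → ℝ) : partialSum x 0 = 0 := by
  simp [partialSum]

theorem partialSum_self (x : Fin n → ℝ) : partialSum x n = ∑ i, x i := by
  simp [partialSum]

theorem partialSum_mono (k : ℕ) : Monotone fun x : Fin n → ℝ ↦ partialSum x k :=
  fun _ _ h ↦ sum_le_sum fun i _ ↦ h i

theorem measurable_partialSum (k : ℕ) : Measurable fun x : Fin n → ℝ ↦ partialSum x k := by
  unfold partialSum; fun_prop

theorem partialSum_negRev (x : Fin n → ℝ) {k : ℕ} (hk : k ≤ n) :
    partialSum (negRev x) k = partialSum x (n - k) - partialSum x n := by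
  have hrev : ∑ i : Fin n with i.val < k, x i.rev = ∑ i : Fin n with ¬ i.val < n - k, x i := by
    rw [sum_filter, sum_filter]
    refine Fintype.sum_equiv Fin.revPerm _ _ fun i ↦ ?_
    simp only [Fin.revPerm_apply, Fin.val_rev]
    have := i.isLt
    exact if_congr (by omega) rfl rfl
  rw [partialSum_self, ← sum_filter_add_sum_filter_not univ (fun i : Fin n ↦ i.val < n - k)]
  simp only [partialSum, negRev, sum_neg_distrib, hrev]
  ring

theorem partialSum_negRev_self (x : Fin n → ℝ) : partialSum (negRev x) n = -partialSum x n := by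
  simp [partialSum_negRev x le_rfl]

theorem partialSum_le_runningMax (x : Fin n → ℝ) {k : ℕ} (hk : k ≤ n) :
    partialSum x k ≤ runningMax x :=
  le_ciSup (f := fun k : Fin (n + 1) ↦ partialSum x k) (Finite.bddAbove_range _)
    ⟨k, Nat.lt_succ_of_le hk⟩

theorem runningMax_le {x : Fin n → ℝ} {c : ℝ} (h : ∀ k ≤ n, partialSum x k ≤ c) :
    runningMax x ≤ c :=
  ciSup_le fun k ↦ h k (Nat.le_of_lt_succ k.isLt)

theorem runningMax_nonneg (x : Fin n → ℝ) : 0 ≤ runningMax x := by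
  simpa using partialSum_le_runningMax x (Nat.zero_le n)

theorem runningMax_mono : Monotone (runningMax : (Fin n → ℝ) → ℝ) := fun _ y h ↦
  runningMax_le fun k hk ↦ (partialSum_mono k h).trans (partialSum_le_runningMax y hk)

theorem measurable_runningMax : Measurable (runningMax : (Fin n → ℝ) → ℝ) :=
  Measurable.iSup fun k ↦ measurable_partialSum k

theorem runningMax_negRev (x : Fin n → ℝ) :
    runningMax (negRev x) = runningMax x - partialSum x n := by
  refine le_antisymm (runningMax_le fun k hk ↦ ?_) ?_
  · rw [partialSum_negRev x hk]
    linarith [partialSum_le_runningMax x (Nat.sub_le n k)]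
  · rw [sub_le_iff_le_add]
    refine runningMax_le fun k hk ↦ ?_
    have := partialSum_le_runningMax (negRev x) (Nat.sub_le n k)
    rw [partialSum_negRev x (Nat.sub_le n k), Nat.sub_sub_self hk] at this
    linarith

theorem negRev_antitone : Antitone (negRev : (Fin n → ℝ) → Fin n → ℝ) :=
  fun _ _ h i ↦ neg_le_neg (h i.rev)

theorem measurable_negRev : Measurable (negRev : (Fin n → ℝ) → Fin n → ℝ) := by
  unfold negRev; fun_prop

theorem map_negRev_pi (μ : Measure ℝ) [IsFiniteMeasure μ] :
    (Measure.pi fun _ : Fin n ↦ μ).map negRev = Measure.pi fun _ ↦ μ.map Neg.neg := by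
  refine (Measure.pi_eq fun s hs ↦ ?_).symm
  have hpre : negRev ⁻¹' Set.univ.pi s = Set.univ.pi fun i ↦ Neg.neg ⁻¹' s i.rev := by
    ext x
    simp only [Set.mem_preimage, Set.mem_univ_pi, negRev]
    exact (Fin.revPerm.forall_congr fun i ↦ by simp).symm
  rw [Measure.map_apply measurable_negRev (.univ_pi hs), hpre, Measure.pi_pi]
  refine Fintype.prod_equiv Fin.revPerm _ _ fun i ↦ ?_
  rw [Measure.map_apply measurable_neg (hs _)]
  rfl

theorem monotone_max_runningMax (z : ℝ) :
    Monotone fun x : Fin n → ℝ ↦ max z (runningMax x) :=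
  fun _ _ h ↦ max_le_max le_rfl (runningMax_mono h)

theorem antitone_max_runningMax_sub (z : ℝ) :
    Antitone fun x : Fin n → ℝ ↦ max z (runningMax x) - partialSum x n := by
  have hdual (x : Fin n → ℝ) : max z (runningMax x) - partialSum x n =
      max (z + partialSum (negRev x) n) (runningMax (negRev x)) := by
    rw [runningMax_negRev, partialSum_negRev_self, ← sub_eq_add_neg, max_sub_sub_right]
  intro x y hxy
  simp only [hdual]
  exact max_le_max (add_le_add_right (partialSum_mono n (negRev_antitone hxy)) z)
    (runningMax_mono (negRev_antitone hxy))

theorem ConvexOn.map_max_runningMax_add_map_negRev_le {g : ℝ → ℝ} (hg : ConvexOn ℝ (Ici 0) g)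
    {z : ℝ} (hz : 0 ≤ z) (x : Fin n → ℝ) :
    g (max z (runningMax x)) + g (max z (runningMax (negRev x))) ≤
      g (max z (runningMax x) - partialSum x n) +
        g (max z (runningMax (negRev x)) - partialSum (negRev x) n) := by
  rw [runningMax_negRev, partialSum_negRev_self, sub_neg_eq_add]
  exact hg.map_max_add_map_max_le hz (runningMax_nonneg x) (partialSum_le_runningMax x le_rfl)

end Walk

theorem integral_comp_max_runningMax_le {μ : Measure ℝ} [IsProbabilityMeasure μ]
    (hμ : StochasticallyLE (μ.map Neg.neg) μ) {g : ℝ → ℝ} (hanti : Antitone g)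
    (hconv : ConvexOn ℝ (Ici 0) g) {a : ℝ} (ha : ∀ t, a ≤ g t) (n : ℕ) {z : ℝ} (hz : 0 ≤ z) :
    ∫ x, g (max z (runningMax x)) ∂(Measure.pi fun _ : Fin n ↦ μ) ≤
      ∫ x, g (max z (runningMax x) - partialSum x n) ∂(Measure.pi fun _ : Fin n ↦ μ) := by
  have : IsProbabilityMeasure (μ.map Neg.neg) :=
    Measure.isProbabilityMeasure_map measurable_neg.aemeasurable
  set π := Measure.pi fun _ : Fin n ↦ μ
  set π' := Measure.pi fun _ : Fin n ↦ μ.map Neg.neg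
  set u : (Fin n → ℝ) → ℝ := fun x ↦ max z (runningMax x)
  set v : (Fin n → ℝ) → ℝ := fun x ↦ max z (runningMax x) - partialSum x n
  have hum : Measurable u := measurable_const.max measurable_runningMax
  have hvm : Measurable v := hum.sub (measurable_partialSum n)
  have hu (x : Fin n → ℝ) : 0 ≤ u x := hz.trans (le_max_left _ _)
  have hv (x : Fin n → ℝ) : 0 ≤ v x :=
    sub_nonneg.2 ((partialSum_le_runningMax x le_rfl).trans (le_max_right _ _))
  have hint {w : (Fin n → ℝ) → ℝ} (hwm : Measurable w) (hw : ∀ x, 0 ≤ w x)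
      (ρ : Measure (Fin n → ℝ)) [IsProbabilityMeasure ρ] : Integrable (fun x ↦ g (w x)) ρ :=
    hanti.integrable_comp_of_nonneg ha hwm hw
  have hreverse {F : (Fin n → ℝ) → ℝ} (hF : Measurable F) :
      ∫ x, F (negRev x) ∂π = ∫ x, F x ∂π' := by
    rw [show π' = π.map negRev from (map_negRev_pi μ).symm,
      integral_map measurable_negRev.aemeasurable hF.aestronglyMeasurable]
  have hpaired : ∫ x, g (u x) ∂π + ∫ x, g (u x) ∂π' ≤ ∫ x, g (v x) ∂π + ∫ x, g (v x) ∂π' := by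
    have hu' := hint (w := fun x ↦ u (negRev x)) (hum.comp measurable_negRev) (fun x ↦ hu _) π
    have hv' := hint (w := fun x ↦ v (negRev x)) (hvm.comp measurable_negRev) (fun x ↦ hv _) π
    rw [← hreverse (F := fun x ↦ g (u x)) (hanti.measurable.comp hum),
      ← hreverse (F := fun x ↦ g (v x)) (hanti.measurable.comp hvm),
      ← integral_add (hint hum hu π) hu', ← integral_add (hint hvm hv π) hv']
    exact integral_mono ((hint hum hu π).add hu') ((hint hvm hv π).add hv')
      (hconv.map_max_runningMax_add_map_negRev_le hz)
  have hgap : ∫ x, g (v x) - g (u x) ∂π' ≤ ∫ x, g (v x) - g (u x) ∂π :=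
    hμ.integral_pi_le_of_monotone
      (fun x y hxy ↦ sub_le_sub (hanti.comp (antitone_max_runningMax_sub z) hxy)
        (hanti.comp_monotone (monotone_max_runningMax z) hxy))
      ((hanti.measurable.comp hvm).sub (hanti.measurable.comp hum))
      fun x ↦ abs_sub_le_of_le_of_le (ha _) (hanti (hv x)) (ha _) (hanti (hu x))
  rw [integral_sub (hint hvm hv π') (hint hum hu π'), integral_sub (hint hvm hv π) (hint hum hu π)]
    at hgap
  linarith

theorem lintegral_ofReal_sub_comp_max_runningMax_sub_le {Ω : Type*} [MeasurableSpace Ω]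
    {P : Measure Ω} {μ : Measure ℝ} [IsProbabilityMeasure μ] {n : ℕ} {Y : Ω → Fin n → ℝ}
    (hY : Measurable Y) (hlaw : P.map Y = Measure.pi fun _ ↦ μ)
    (hμ : StochasticallyLE (μ.map Neg.neg) μ) {f : ℝ → ℝ} (hanti : AntitoneOn f (Ici 0))
    (hconv : ConvexOn ℝ (Ici 0) f) {z : ℝ} (hz : 0 ≤ z) :
    ∫⁻ ω, ENNReal.ofReal (f 0 - f (max z (runningMax (Y ω)) - partialSum (Y ω) n)) ∂P ≤
      ∫⁻ ω, ENNReal.ofReal (f 0 - f (max z (runningMax (Y ω)))) ∂P := by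
  -- truncating `f` from below at level `f 0 - c` makes all the integrals finite
  set T : ℕ → ℝ → ℝ := fun c t ↦ max (f (max t 0)) (f 0 - c)
  have hT_le (c : ℕ) (t : ℝ) : T c t ≤ f 0 :=
    max_le (hanti self_mem_Ici (le_max_right t 0) (le_max_right t 0))
      (sub_le_self _ c.cast_nonneg)
  have hlim {w : (Fin n → ℝ) → ℝ} (hwm : Measurable w) (hw : ∀ x, 0 ≤ w x) :
      ∫⁻ ω, ENNReal.ofReal (f 0 - f (w (Y ω))) ∂P =
        ⨆ c : ℕ, ENNReal.ofReal (f 0 - ∫ x, T c (w x) ∂(Measure.pi fun _ : Fin n ↦ μ)) := by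
    have hTm (c : ℕ) : Measurable fun x ↦ T c (w x) :=
      (hanti.antitone_max_comp_max_zero _).measurable.comp hwm
    calc ∫⁻ ω, ENNReal.ofReal (f 0 - f (w (Y ω))) ∂P
        = ∫⁻ ω, ⨆ c : ℕ, ENNReal.ofReal (f 0 - T c (w (Y ω))) ∂P :=
          lintegral_congr fun ω ↦ by
            simp only [T, max_eq_left (hw (Y ω))]
            exact ENNReal.ofReal_sub_eq_iSup_ofReal_sub_max _ _
      _ = ⨆ c : ℕ, ∫⁻ ω, ENNReal.ofReal (f 0 - T c (w (Y ω))) ∂P :=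
          lintegral_iSup (fun c ↦ (measurable_const.sub ((hTm c).comp hY)).ennreal_ofReal)
            fun c c' hcc' ω ↦ ENNReal.ofReal_le_ofReal <| sub_le_sub_left
              (max_le_max le_rfl (sub_le_sub_left (Nat.cast_le.2 hcc') _)) _
      _ = _ := by
          congr 1 with c
          rw [← lintegral_map (f := fun x ↦ ENNReal.ofReal (f 0 - T c (w x)))
            (measurable_const.sub (hTm c)).ennreal_ofReal hY, hlaw]
          exact lintegral_ofReal_sub_eq (hTm c) (fun x ↦ le_max_right _ _) fun x ↦ hT_le c _
  rw [hlim (w := fun x ↦ max z (runningMax x) - partialSum x n)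
      ((measurable_const.max measurable_runningMax).sub (measurable_partialSum n))
      fun x ↦ sub_nonneg.2 ((partialSum_le_runningMax x le_rfl).trans (le_max_right _ _)),
    hlim (w := fun x ↦ max z (runningMax x)) (measurable_const.max measurable_runningMax)
      fun x ↦ hz.trans (le_max_left _ _)]
  refine iSup_mono fun c ↦ ENNReal.ofReal_le_ofReal (sub_le_sub_left ?_ _)
  exact integral_comp_max_runningMax_le hμ (hanti.antitone_max_comp_max_zero _)
    (hconv.max_comp_max_zero _) (fun _ ↦ le_max_right _ _) n hz

theorem sum_range_eq_partialSum (y : ℕ → ℝ) {k n : ℕ} (hk : k ≤ n) :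
    ∑ i ∈ Finset.range k, y i = partialSum (fun i : Fin n ↦ y i) k := by
  rw [partialSum, Finset.sum_filter, Fin.sum_univ_eq_sum_range (fun i ↦ if i < k then y i else 0),
    ← Finset.sum_filter]
  congr 1
  ext i
  simp only [Finset.mem_range, Finset.mem_filter]
  omega

theorem ProbabilityTheory.iIndepFun.map_fun_fin_eq_pi {Ω β : Type*} [MeasurableSpace Ω]
    [MeasurableSpace β] {P : Measure Ω} [IsProbabilityMeasure P] {ξ : ℕ → Ω → β}
    (hindep : iIndepFun ξ P) (hξ : ∀ i, Measurable (ξ i)) (hid : ∀ i, P.map (ξ i) = P.map (ξ 0))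
    (n : ℕ) : P.map (fun ω (i : Fin n) ↦ ξ i ω) = Measure.pi fun _ ↦ P.map (ξ 0) := by
  rw [(hindep.precomp Fin.val_injective).map_fun_eq_pi_map fun i : Fin n ↦ (hξ i).aemeasurable]
  simp only [hid]

open Finset in
/-- Corollary 2.4: for a random walk with i.i.d. steps stochastically
dominating their opposites, and `f : [0,∞) → ℝ` nonincreasing and convex,
`E[f(max z (M n) - X n)] ≥ E[f(max z (M n))]` for all `n` and `z ≥ 0`.
Since `f ≤ f 0` on `[0,∞)`, the inequality of expectations (which may equal
`-∞`) is expressed through the Lebesgue integrals of `f 0 - f (⋯) ≥ 0`. -/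
theorem key_inequality_corollary {Ω : Type*} [MeasurableSpace Ω] (P : Measure Ω)
    [IsProbabilityMeasure P]
    (ξ : ℕ → Ω → ℝ) (hξmeas : ∀ i, Measurable (ξ i))
    (hindep : iIndepFun ξ P)
    (hid : ∀ i, Measure.map (ξ i) P = Measure.map (ξ 0) P)
    (hst : ∀ a : ℝ, P {ω | a < ξ 0 ω} ≥ P {ω | a < -ξ 0 ω})
    (X : ℕ → Ω → ℝ) (hX : ∀ n ω, X n ω = ∑ i ∈ range n, ξ i ω)
    (M : ℕ → Ω → ℝ) (hM : ∀ n ω, M n ω = ⨆ k : Fin (n + 1), X k ω)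
    (f : ℝ → ℝ) (hmono : AntitoneOn f (Set.Ici 0))
    (hconv : ConvexOn ℝ (Set.Ici 0) f)
    (n : ℕ) (z : ℝ) (hz : 0 ≤ z) :
    ∫⁻ ω, ENNReal.ofReal (f 0 - f (max z (M n ω) - X n ω)) ∂P ≤
      ∫⁻ ω, ENNReal.ofReal (f 0 - f (max z (M n ω))) ∂P := by
  set Y : Ω → Fin n → ℝ := fun ω i ↦ ξ i ω
  have hXY (k : ℕ) (hk : k ≤ n) (ω : Ω) : X k ω = partialSum (Y ω) k :=
    (hX k ω).trans (sum_range_eq_partialSum (ξ · ω) hk)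
  have hMY (ω : Ω) : M n ω = runningMax (Y ω) :=
    (hM n ω).trans (iSup_congr fun k ↦ hXY k (Nat.le_of_lt_succ k.isLt) ω)
  have : IsProbabilityMeasure (P.map (ξ 0)) :=
    Measure.isProbabilityMeasure_map (hξmeas 0).aemeasurable
  have hdom : StochasticallyLE ((P.map (ξ 0)).map Neg.neg) (P.map (ξ 0)) := fun a ↦ by
    rw [Measure.map_map measurable_neg (hξmeas 0),
      Measure.map_apply (measurable_neg.comp (hξmeas 0)) measurableSet_Ioi,
      Measure.map_apply (hξmeas 0) measurableSet_Ioi]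
    exact hst a
  simp only [hMY, hXY n le_rfl]
  exact lintegral_ofReal_sub_comp_max_runningMax_sub_le (measurable_pi_lambda _ fun i ↦ hξmeas i)
    (hindep.map_fun_fin_eq_pi hξmeas hid n) hdom hmono hconv hz
end
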